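/- arXiv:1606.03486 — 4 statements merged into one kernel-verified Lean document; each statement's English description precedes it below -/
import Mathlib

section
/- Let n ≥ 2, m ∈ ℤ, ℓ ∈ ℕ and let h : [0,∞) → ℝ be continuous with h = 0 on [b,∞) for some b ∈ (0,1). Define G(ψ) = (sin ψ)^{−m} · ∫_{sin ψ}^{1} h(ρ) · ρ · K_ℓ(ψ,ρ) / √(ρ² − sin²ψ) dρ for ψ ∈ (0, π/2). Then for every t ∈ (0,1): (1−t)^{−(n−2)/2} · G(arccos √t) = ∫₀^{t} ( h(√(1−s)) / 2 ) · F_ℓ(t,s) / √(t−s) ds. -/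
/-!
Substitute `ρ = √(1 - s)`, so that `dρ = -ds / (2ρ)` and, for `ψ = arccos √t`,
`ρ² - sin² ψ = t - s`. With `θ = arcsin (sin ψ / ρ)` one has `sin θ = sin ψ / ρ` and
`cos θ = √(ρ² - sin² ψ) / ρ`, so the addition formulas give
`sin (θ ∓ ψ) = (sin ψ / ρ) (cos ψ ∓ √(ρ² - sin² ψ))` and
`cos (θ ∓ ψ) = (cos ψ √(ρ² - sin² ψ) ± sin² ψ) / ρ`. Hence
`K_ℓ(ψ, ρ) = (sin ψ)^(m+n-2) F_ℓ(t, s)`, and the powers of `sin ψ = √(1 - t)` cancel the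
prefactors `(sin ψ)^(-m)` and `(1 - t)^(-(n-2)/2)`.
-/

open MeasureTheory Real

/-- The kernel `K_ℓ(ψ, ρ) = ρ^{m+n-2} Σ_{σ=±1} σ^ℓ (sin(arcsin(sin ψ/ρ) - σψ))^{m+n-2}
C_ℓ(cos(arcsin(sin ψ/ρ) - σψ))`, where `C` is the Gegenbauer polynomial `C_ℓ^{(n-2)/2}`. -/
noncomputable def Kker (n : ℕ) (m : ℤ) (ℓ : ℕ) (C : Polynomial ℝ) (ψ ρ : ℝ) : ℝ :=
  ρ ^ (m + (n : ℤ) - 2) *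
    (Real.sin (Real.arcsin (Real.sin ψ / ρ) - ψ) ^ (m + (n : ℤ) - 2) *
        C.eval (Real.cos (Real.arcsin (Real.sin ψ / ρ) - ψ)) +
      (-1 : ℝ) ^ ℓ * Real.sin (Real.arcsin (Real.sin ψ / ρ) + ψ) ^ (m + (n : ℤ) - 2) *
        C.eval (Real.cos (Real.arcsin (Real.sin ψ / ρ) + ψ)))

/-- The kernel `F_ℓ(t, s) = Σ_{σ=±1} σ^ℓ (√t - σ√(t-s))^{m+n-2}
C_ℓ((√t √(t-s) + σ(1-t)) / √(1-s))`. -/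
noncomputable def Fker (n : ℕ) (m : ℤ) (ℓ : ℕ) (C : Polynomial ℝ) (t s : ℝ) : ℝ :=
  (Real.sqrt t - Real.sqrt (t - s)) ^ (m + (n : ℤ) - 2) *
      C.eval ((Real.sqrt t * Real.sqrt (t - s) + (1 - t)) / Real.sqrt (1 - s)) +
    (-1 : ℝ) ^ ℓ * (Real.sqrt t + Real.sqrt (t - s)) ^ (m + (n : ℤ) - 2) *
      C.eval ((Real.sqrt t * Real.sqrt (t - s) - (1 - t)) / Real.sqrt (1 - s))

lemma Kker_eq {n : ℕ} {m : ℤ} {ℓ : ℕ} {C : Polynomial ℝ} {ψ ρ : ℝ} (hρ : 0 < ρ)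
    (hψ : |sin ψ| ≤ ρ) :
    Kker n m ℓ C ψ ρ = sin ψ ^ (m + n - 2) *
      ((cos ψ - √(ρ ^ 2 - sin ψ ^ 2)) ^ (m + n - 2) *
          C.eval ((cos ψ * √(ρ ^ 2 - sin ψ ^ 2) + sin ψ ^ 2) / ρ) +
        (-1) ^ ℓ * (cos ψ + √(ρ ^ 2 - sin ψ ^ 2)) ^ (m + n - 2) *
          C.eval ((cos ψ * √(ρ ^ 2 - sin ψ ^ 2) - sin ψ ^ 2) / ρ)) := by
  set s := sin ψ
  set w := √(ρ ^ 2 - s ^ 2)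
  set θ := arcsin (s / ρ)
  have hsinθ : sin θ = s / ρ := by
    obtain ⟨hlo, hhi⟩ := abs_le.mp hψ
    exact sin_arcsin ((le_div_iff₀ hρ).mpr (by linarith)) ((div_le_one hρ).mpr hhi)
  have hcosθ : cos θ = w / ρ := by
    rw [cos_arcsin, div_pow, one_sub_div (by positivity), sqrt_div' _ (sq_nonneg ρ),
      sqrt_sq hρ.le]
  have hsin_sub : sin (θ - ψ) = s / ρ * (cos ψ - w) := by
    rw [sin_sub, hsinθ, hcosθ]; ring
  have hsin_add : sin (θ + ψ) = s / ρ * (cos ψ + w) := by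
    rw [sin_add, hsinθ, hcosθ]; ring
  have hcos_sub : cos (θ - ψ) = (cos ψ * w + s ^ 2) / ρ := by
    rw [cos_sub, hsinθ, hcosθ]; ring
  have hcos_add : cos (θ + ψ) = (cos ψ * w - s ^ 2) / ρ := by
    rw [cos_add, hsinθ, hcosθ]; ring
  have hρk : ρ ^ (m + n - 2) ≠ 0 := zpow_ne_zero _ hρ.ne'
  rw [Kker, hsin_sub, hsin_add, hcos_sub, hcos_add, mul_zpow, mul_zpow, div_zpow]
  field_simp

lemma sq_sqrt_one_sub_sub_sq_sqrt_one_sub {t u : ℝ} (hu : u ≤ 1) (ht : t ≤ 1) :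
    √(1 - u) ^ 2 - √(1 - t) ^ 2 = t - u := by
  rw [sq_sqrt (by linarith), sq_sqrt (by linarith)]; ring

lemma Kker_arccos_sqrt {n : ℕ} {m : ℤ} {ℓ : ℕ} {C : Polynomial ℝ} {t u : ℝ} (hu : 0 ≤ u)
    (hut : u ≤ t) (ht : t < 1) :
    Kker n m ℓ C (arccos √t) √(1 - u) = √(1 - t) ^ (m + n - 2) * Fker n m ℓ C t u := by
  have hsin : sin (arccos √t) = √(1 - t) := by
    rw [sin_arccos, sq_sqrt (hu.trans hut)]
  have hcos : cos (arccos √t) = √t :=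
    cos_arccos (by linarith [sqrt_nonneg t]) (sqrt_le_one.mpr ht.le)
  have hle : |sin (arccos √t)| ≤ √(1 - u) := by
    rw [hsin, abs_of_nonneg (sqrt_nonneg _)]
    exact sqrt_le_sqrt (by linarith)
  rw [Kker_eq (sqrt_pos.mpr (by linarith)) hle, hsin, hcos,
    sq_sqrt_one_sub_sub_sq_sqrt_one_sub (by linarith) ht.le, sq_sqrt (by linarith : 0 ≤ 1 - t),
    Fker]

lemma integral_sqrt_one_sub_one (f : ℝ → ℝ) {t : ℝ} (ht₀ : 0 ≤ t) (ht₁ : t ≤ 1) :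
    ∫ ρ in √(1 - t)..1, f ρ = ∫ u in 0..t, f √(1 - u) / (2 * √(1 - u)) := by
  have hanti : StrictAntiOn (fun u => √(1 - u)) (Set.Ioo 0 t) := fun u _ v hv huv =>
    sqrt_lt_sqrt (by linarith [hv.2]) (by linarith)
  have himage : (fun u => √(1 - u)) '' Set.Ioo 0 t = Set.Ioo √(1 - t) 1 := by
    ext x
    constructor
    · rintro ⟨u, ⟨hu₀, hut⟩, rfl⟩
      exact ⟨sqrt_lt_sqrt (by linarith) (by linarith), (sqrt_lt' one_pos).mpr (by linarith)⟩
    · rintro ⟨hx₁, hx₂⟩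
      have hx₀ : 0 < x := (sqrt_nonneg _).trans_lt hx₁
      have hxx : 1 - t < x ^ 2 := (sqrt_lt' hx₀).mp hx₁
      refine ⟨1 - x ^ 2, ⟨by nlinarith, by linarith⟩, ?_⟩
      simp only [sub_sub_cancel, sqrt_sq hx₀.le]
  have hderiv : ∀ u ∈ Set.Ioo 0 t,
      HasDerivWithinAt (fun u => √(1 - u)) (-(1 / (2 * √(1 - u)))) (Set.Ioo 0 t) u := by
    intro u hu
    have h := ((hasDerivAt_id' u).const_sub 1).sqrt (by linarith [hu.2] : 1 - u ≠ 0)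
    simpa only [neg_div] using h.hasDerivWithinAt
  rw [intervalIntegral.integral_of_le (sqrt_le_one.mpr (by linarith)),
    intervalIntegral.integral_of_le ht₀, integral_Ioc_eq_integral_Ioo,
    integral_Ioc_eq_integral_Ioo, ← himage,
    integral_image_eq_integral_abs_deriv_smul measurableSet_Ioo hderiv hanti.injOn]
  refine setIntegral_congr_fun measurableSet_Ioo fun u hu => ?_
  have : 0 < √(1 - u) := sqrt_pos.mpr (by linarith [hu.2])
  rw [abs_neg, abs_of_pos (by positivity), smul_eq_mul]
  ring

lemma rpow_neg_natCast_div_two {x : ℝ} (hx : 0 ≤ x) (d : ℕ) :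
    x ^ (-(d : ℝ) / 2) = √x ^ (-(d : ℤ)) := by
  rw [show -(d : ℝ) / 2 = 1 / 2 * ((-(d : ℤ) : ℤ) : ℝ) by push_cast; ring, rpow_mul hx,
    ← sqrt_eq_rpow, rpow_intCast]

theorem stmt9_general (d : ℕ) (m : ℤ) (ℓ : ℕ)
    (C : Polynomial ℝ)
    (h : ℝ → ℝ)
    (G : ℝ → ℝ)
    (hG : ∀ ψ ∈ Set.Ioo 0 (Real.pi / 2), G ψ = Real.sin ψ ^ (-m) *
      ∫ ρ in (Real.sin ψ)..1,
        h ρ * ρ * Kker (d + 2) m ℓ C ψ ρ / Real.sqrt (ρ ^ 2 - Real.sin ψ ^ 2))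
    (t : ℝ) (ht : t ∈ Set.Ioo (0 : ℝ) 1) :
    (1 - t) ^ (-(d : ℝ) / 2) * G (Real.arccos (Real.sqrt t)) =
      ∫ s in (0 : ℝ)..t,
        (h (Real.sqrt (1 - s)) / 2) * Fker (d + 2) m ℓ C t s / Real.sqrt (t - s) := by
  obtain ⟨ht₀, ht₁⟩ := ht
  have hψ : arccos √t ∈ Set.Ioo 0 (π / 2) :=
    ⟨arccos_pos.mpr ((sqrt_lt' one_pos).mpr (by linarith)),
      arccos_lt_pi_div_two.mpr (sqrt_pos.mpr ht₀)⟩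
  have hsin : sin (arccos √t) = √(1 - t) := by rw [sin_arccos, sq_sqrt ht₀.le]
  have ha : 0 < √(1 - t) := sqrt_pos.mpr (by linarith)
  rw [hG _ hψ, hsin, integral_sqrt_one_sub_one _ ht₀.le ht₁.le, ← mul_assoc,
    ← intervalIntegral.integral_const_mul, rpow_neg_natCast_div_two (by linarith)]
  refine intervalIntegral.integral_congr fun u hu => ?_
  rw [Set.uIcc_of_le ht₀.le] at hu
  have hρ : 0 < √(1 - u) := sqrt_pos.mpr (by linarith [hu.2])
  have hpow : √(1 - t) ^ (-(d : ℤ)) * √(1 - t) ^ (-m) *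
      √(1 - t) ^ (m + ((d + 2 : ℕ) : ℤ) - 2) = 1 := by
    rw [← zpow_add₀ ha.ne', ← zpow_add₀ ha.ne']; push_cast; ring_nf; exact zpow_zero _
  rw [Kker_arccos_sqrt hu.1 hu.2 ht₁,
    sq_sqrt_one_sub_sub_sq_sqrt_one_sub (by linarith [hu.2]) ht₁.le]
  field_simp
  linear_combination h √(1 - u) * Fker (d + 2) m ℓ C t u / √(t - u) * hpow

/-- Lemma 3.3 (here `n = d + 2 ≥ 2`): change of variables turning the Abel-type equation
with kernel `K_ℓ` into one with kernel `F_ℓ`. `C` is the Gegenbauer polynomial of degree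
`ℓ` with parameter `(n-2)/2`, normalized by `C(1) = 1`. -/
theorem stmt9 (d : ℕ) (m : ℤ) (ℓ : ℕ)
    (C : Polynomial ℝ) (hCdeg : C.natDegree = ℓ) (hC1 : C.eval 1 = 1)
    (hCode : ∀ x : ℝ, (1 - x ^ 2) * (Polynomial.derivative (Polynomial.derivative C)).eval x -
      ((d : ℝ) + 1) * x * (Polynomial.derivative C).eval x +
      (ℓ : ℝ) * ((ℓ : ℝ) + (d : ℝ)) * C.eval x = 0)
    (h : ℝ → ℝ) (hh : Continuous h) (b : ℝ) (hb : b ∈ Set.Ioo (0 : ℝ) 1)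
    (hhb : ∀ x ≥ b, h x = 0)
    (G : ℝ → ℝ)
    (hG : ∀ ψ ∈ Set.Ioo 0 (Real.pi / 2), G ψ = Real.sin ψ ^ (-m) *
      ∫ ρ in (Real.sin ψ)..1,
        h ρ * ρ * Kker (d + 2) m ℓ C ψ ρ / Real.sqrt (ρ ^ 2 - Real.sin ψ ^ 2))
    (t : ℝ) (ht : t ∈ Set.Ioo (0 : ℝ) 1) :
    (1 - t) ^ (-(d : ℝ) / 2) * G (Real.arccos (Real.sqrt t)) =
      ∫ s in (0 : ℝ)..t,
        (h (Real.sqrt (1 - s)) / 2) * Fker (d + 2) m ℓ C t s / Real.sqrt (t - s) :=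
  stmt9_general d m ℓ C h G hG t ht
end

section
/- Let ℓ ∈ ℕ, let h : [0,∞) → ℝ be continuous with h(0) = 0 and h = 0 on [b,∞) for some b ∈ (0,1), and let f : ℝ² → ℝ be the continuous function with f(ρ·(cos α, sin α)) = h(ρ)·cos(ℓα) for all ρ > 0, α ∈ ℝ, and f(0) = 0. Define the V-line transform (Rf)(φ,ψ) = Σ_{σ=±1} ∫₀^∞ f( (cos φ, sin φ) − r·(cos(φ−σψ), sin(φ−σψ)) ) dr for φ ∈ ℝ, ψ ∈ (0,π/2). Then for all φ ∈ ℝ and ψ ∈ (0,π/2): (Rf)(φ,ψ) = 2·cos(ℓφ) · ∫_{sin ψ}^{1} h(ρ) · ρ · K_ℓ(sin ψ, ρ) / √(ρ² − sin²ψ) dρ, where K_ℓ(s,ρ) = Σ_{σ=±1} σ^ℓ · cos( ℓ·(arcsin(s/ρ) − σ·arcsin(s)) ). -/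
/-!
Along the ray from the vertex `(cos φ, sin φ)` in direction `-(cos (φ - ψ), sin (φ - ψ))` the
squared distance to the origin is `(r - cos ψ)² + sin² ψ`, so each radius `ρ ∈ (sin ψ, 1)` is
met twice, at `r = cos ψ ∓ √(ρ² - sin² ψ)`, with polar angles `φ - ψ + β` and `φ - ψ + π - β`,
where `β = arcsin (sin ψ / ρ)`. The substitution `w = √(ρ² - sin² ψ)` on both branches gives the
Jacobian `ρ / √(ρ² - sin² ψ)`. Since `f` is even in its second coordinate, the second ray is the
mirror image of the first ray for the vertex angle `-φ`, and adding the two ray integrals makes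
the `φ`-dependence factor out as `2 cos (ℓ φ)`.
-/

open MeasureTheory Real

/-- The V-line (conical) Radon transform in `ℝ²` of a continuous compactly supported
function `f`: `(Rf)(φ,ψ) = Σ_{σ=±1} ∫₀^∞ f((cos φ, sin φ) - r (cos(φ-σψ), sin(φ-σψ))) dr`. -/
noncomputable def vLine (f : ℝ × ℝ → ℝ) (φ ψ : ℝ) : ℝ :=
  (∫ r in Set.Ioi (0 : ℝ),
      f (Real.cos φ - r * Real.cos (φ - ψ), Real.sin φ - r * Real.sin (φ - ψ))) +
    ∫ r in Set.Ioi (0 : ℝ),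
      f (Real.cos φ - r * Real.cos (φ + ψ), Real.sin φ - r * Real.sin (φ + ψ))

/-- The 2D kernel `K_ℓ(s,ρ) = Σ_{σ=±1} σ^ℓ cos(ℓ (arcsin(s/ρ) - σ arcsin s))`. -/
noncomputable def K2 (ℓ : ℕ) (s ρ : ℝ) : ℝ :=
  Real.cos ((ℓ : ℝ) * (Real.arcsin (s / ρ) - Real.arcsin s)) +
    (-1 : ℝ) ^ ℓ * Real.cos ((ℓ : ℝ) * (Real.arcsin (s / ρ) + Real.arcsin s))

open Set

lemma exists_eq_polar (p : ℝ × ℝ) :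
    ∃ α, p = (√(p.1 ^ 2 + p.2 ^ 2) * cos α, √(p.1 ^ 2 + p.2 ^ 2) * sin α) := by
  let z : ℂ := ⟨p.1, p.2⟩
  have hz : ‖z‖ = √(p.1 ^ 2 + p.2 ^ 2) := by
    simp [z, Complex.norm_def, Complex.normSq_apply, sq]
  exact ⟨z.arg, by rw [← hz, Complex.norm_mul_cos_arg, Complex.norm_mul_sin_arg]⟩

section Substitution

variable {E : Type*} [NormedAddCommGroup E] [NormedSpace ℝ E]

theorem integral_eq_integral_Ioi_add_reflect {g : ℝ → E} (hg : Integrable g) (c : ℝ) :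
    ∫ x, g x = ∫ w in Ioi 0, (g (c - w) + g (c + w)) := by
  have hk : Integrable (fun w => g (c + w)) := hg.comp_add_left c
  have hk' : Integrable (fun w => g (c - w)) := hg.comp_sub_left c
  rw [← integral_add_left_eq_self (μ := volume) g c,
    ← intervalIntegral.integral_Iic_add_Ioi hk.integrableOn hk.integrableOn,
    integral_add hk'.integrableOn hk.integrableOn]
  congr 1
  simpa [sub_eq_add_neg] using integral_comp_neg_Iic 0 (fun w => g (c - w))

variable {s : ℝ}

lemma hasDerivAt_sqrt_sq_sub_sq {ρ : ℝ} (hρ : s ^ 2 < ρ ^ 2) :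
    HasDerivAt (fun x => √(x ^ 2 - s ^ 2)) (ρ / √(ρ ^ 2 - s ^ 2)) ρ := by
  have hd : ρ ^ 2 - s ^ 2 ≠ 0 := by linarith
  convert (((hasDerivAt_pow 2 ρ).sub_const (s ^ 2)).sqrt hd) using 1
  field_simp
  ring

lemma strictMonoOn_sqrt_sq_sub_sq (hs : 0 ≤ s) :
    StrictMonoOn (fun x => √(x ^ 2 - s ^ 2)) (Ioi s) := by
  intro x hx y hy hxy
  have hx : s < x := hx
  exact Real.sqrt_lt_sqrt (by nlinarith) (by nlinarith)

lemma image_sqrt_sq_sub_sq_Ioi (hs : 0 ≤ s) :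
    (fun x => √(x ^ 2 - s ^ 2)) '' Ioi s = Ioi 0 := by
  ext w
  constructor
  · rintro ⟨x, hx, rfl⟩
    have hx : s < x := hx
    exact Real.sqrt_pos.2 (by nlinarith)
  · intro hw
    have hw : 0 < w := hw
    refine ⟨√(w ^ 2 + s ^ 2), ?_, ?_⟩
    · exact (Real.lt_sqrt hs).2 (by nlinarith)
    · simp only
      rw [Real.sq_sqrt (by positivity), add_sub_cancel_right, Real.sqrt_sq hw.le]

theorem integrableOn_Ioi_sqrt_sq_sub_sq_and_integral_eq (hs : 0 ≤ s) {g : ℝ → E}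
    (hg : IntegrableOn g (Ioi 0)) :
    IntegrableOn (fun ρ => (ρ / √(ρ ^ 2 - s ^ 2)) • g √(ρ ^ 2 - s ^ 2)) (Ioi s) ∧
      ∫ ρ in Ioi s, (ρ / √(ρ ^ 2 - s ^ 2)) • g √(ρ ^ 2 - s ^ 2) = ∫ w in Ioi 0, g w := by
  have hsq : ∀ ρ ∈ Ioi s, s ^ 2 < ρ ^ 2 := fun ρ (hρ : s < ρ) => by nlinarith
  have hderiv : ∀ ρ ∈ Ioi s, HasDerivWithinAt (fun x => √(x ^ 2 - s ^ 2))
      (ρ / √(ρ ^ 2 - s ^ 2)) (Ioi s) ρ :=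
    fun ρ hρ => (hasDerivAt_sqrt_sq_sub_sq (hsq ρ hρ)).hasDerivWithinAt
  have hinj := (strictMonoOn_sqrt_sq_sub_sq hs).injOn
  have habs : EqOn (fun ρ => |ρ / √(ρ ^ 2 - s ^ 2)| • g √(ρ ^ 2 - s ^ 2))
      (fun ρ => (ρ / √(ρ ^ 2 - s ^ 2)) • g √(ρ ^ 2 - s ^ 2)) (Ioi s) := fun ρ (hρ : s < ρ) => by
    simp only [abs_of_nonneg (div_nonneg (hs.trans hρ.le) (Real.sqrt_nonneg _))]
  rw [← image_sqrt_sq_sub_sq_Ioi hs] at hg ⊢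
  refine ⟨?_, ?_⟩
  · exact ((integrableOn_image_iff_integrableOn_abs_deriv_smul measurableSet_Ioi hderiv hinj
      g).1 hg).congr_fun habs measurableSet_Ioi
  · rw [integral_image_eq_integral_abs_deriv_smul measurableSet_Ioi hderiv hinj]
    exact (setIntegral_congr_fun measurableSet_Ioi habs).symm

end Substitution

noncomputable def rayPoint (φ θ r : ℝ) : ℝ × ℝ := (cos φ - r * cos θ, sin φ - r * sin θ)

lemma rayPoint_normSq (φ ψ r : ℝ) :
    (rayPoint φ (φ - ψ) r).1 ^ 2 + (rayPoint φ (φ - ψ) r).2 ^ 2 = r * (r - 2 * cos ψ) + 1 := by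
  have e : cos φ * cos (φ - ψ) + sin φ * sin (φ - ψ) = cos ψ := by rw [← cos_sub, sub_sub_cancel]
  simp only [rayPoint]
  linear_combination sin_sq_add_cos_sq φ + r ^ 2 * sin_sq_add_cos_sq (φ - ψ) - 2 * r * e

lemma rayPoint_eq_polar {φ ψ ρ β : ℝ} (hβ : ρ * sin β = sin ψ) :
    rayPoint φ (φ - ψ) (cos ψ - ρ * cos β) = (ρ * cos (φ - ψ + β), ρ * sin (φ - ψ + β)) := by
  have hc : cos φ = cos (φ - ψ) * cos ψ - sin (φ - ψ) * sin ψ := by rw [← cos_add, sub_add_cancel]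
  have hs : sin φ = sin (φ - ψ) * cos ψ + cos (φ - ψ) * sin ψ := by rw [← sin_add, sub_add_cancel]
  rw [rayPoint, Prod.mk.injEq, cos_add, sin_add, hc, hs, ← hβ]
  constructor <;> ring

lemma rayPoint_neg (φ ψ r : ℝ) :
    rayPoint (-φ) (-φ - ψ) r = ((rayPoint φ (φ + ψ) r).1, -(rayPoint φ (φ + ψ) r).2) := by
  rw [rayPoint, rayPoint, ← neg_add', cos_neg, cos_neg, sin_neg, sin_neg]
  ring_nf

lemma cos_add_cos_pi_sub_add_neg (ℓ : ℕ) (φ ψ β : ℝ) :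
    cos (ℓ * (φ - ψ + β)) + cos (ℓ * (φ - ψ + (π - β))) +
        (cos (ℓ * (-φ - ψ + β)) + cos (ℓ * (-φ - ψ + (π - β)))) =
      2 * cos (ℓ * φ) * (cos (ℓ * (β - ψ)) + (-1) ^ ℓ * cos (ℓ * (β + ψ))) := by
  have hπ : ∀ x, cos (ℓ * (x + (π - β))) = (-1) ^ ℓ * cos (ℓ * (β - x)) := fun x => by
    rw [← cos_nat_mul_pi_sub]; ring_nf
  rw [hπ, hπ]
  simp only [mul_add, mul_sub, mul_neg, cos_add, cos_sub, sin_sub, cos_neg, sin_neg]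
  ring

section PolarSeparable

variable {ℓ : ℕ} {h : ℝ → ℝ} {f : ℝ × ℝ → ℝ}

lemma apply_eq_zero_of_sq_le
    (hf : ∀ ρ > (0 : ℝ), ∀ α : ℝ, f (ρ * cos α, ρ * sin α) = h ρ * cos (ℓ * α))
    {b : ℝ} (hb : 0 < b) (hhb : ∀ x ≥ b, h x = 0) {p : ℝ × ℝ} (hp : b ^ 2 ≤ p.1 ^ 2 + p.2 ^ 2) :
    f p = 0 := by
  obtain ⟨α, hα⟩ := exists_eq_polar p
  have hρ : b ≤ √(p.1 ^ 2 + p.2 ^ 2) := (Real.le_sqrt' hb).2 hp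
  rw [hα, hf _ (hb.trans_le hρ), hhb _ hρ, zero_mul]

lemma apply_neg_snd
    (hf : ∀ ρ > (0 : ℝ), ∀ α : ℝ, f (ρ * cos α, ρ * sin α) = h ρ * cos (ℓ * α))
    (p : ℝ × ℝ) : f (p.1, -p.2) = f p := by
  obtain ⟨α, hα⟩ := exists_eq_polar p
  rcases (Real.sqrt_nonneg (p.1 ^ 2 + p.2 ^ 2)).eq_or_lt with hρ | hρ
  · rw [hα, ← hρ, zero_mul, zero_mul, neg_zero]
  · have hneg : (p.1, -p.2) =
        (√(p.1 ^ 2 + p.2 ^ 2) * cos (-α), √(p.1 ^ 2 + p.2 ^ 2) * sin (-α)) := by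
      rw [cos_neg, sin_neg, mul_neg]
      conv_lhs => rw [hα]
    rw [hneg, hf _ hρ, mul_neg, cos_neg, ← hf _ hρ, ← hα]

lemma apply_rayPoint_sqrt
    (hf : ∀ ρ > (0 : ℝ), ∀ α : ℝ, f (ρ * cos α, ρ * sin α) = h ρ * cos (ℓ * α))
    (φ : ℝ) {ψ ρ : ℝ} (hs : 0 < sin ψ) (hρ : sin ψ < ρ) :
    f (rayPoint φ (φ - ψ) (cos ψ - √(ρ ^ 2 - sin ψ ^ 2))) =
        h ρ * cos (ℓ * (φ - ψ + arcsin (sin ψ / ρ))) ∧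
      f (rayPoint φ (φ - ψ) (cos ψ + √(ρ ^ 2 - sin ψ ^ 2))) =
        h ρ * cos (ℓ * (φ - ψ + (π - arcsin (sin ψ / ρ)))) := by
  have hρ0 : 0 < ρ := hs.trans hρ
  have hle : sin ψ / ρ ≤ 1 := (div_le_one hρ0).2 hρ.le
  have hsin : ρ * sin (arcsin (sin ψ / ρ)) = sin ψ := by
    rw [sin_arcsin (by linarith [div_pos hs hρ0]) hle]
    field_simp
  have hcos : ρ * cos (arcsin (sin ψ / ρ)) = √(ρ ^ 2 - sin ψ ^ 2) := by
    rw [cos_arcsin, show 1 - (sin ψ / ρ) ^ 2 = (ρ ^ 2 - sin ψ ^ 2) / ρ ^ 2 by field_simp,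
      Real.sqrt_div' _ (sq_nonneg ρ), Real.sqrt_sq hρ0.le]
    field_simp
  constructor
  · rw [← hcos, rayPoint_eq_polar hsin, hf _ hρ0]
  · rw [← hcos, ← neg_neg (ρ * cos _), ← mul_neg, ← cos_pi_sub, ← sub_eq_add_neg,
      rayPoint_eq_polar (by rwa [sin_pi_sub]), hf _ hρ0]

end PolarSeparable

theorem integral_rayPoint_eq {ℓ : ℕ} {h : ℝ → ℝ} {f : ℝ × ℝ → ℝ} {b : ℝ} (hb : 0 < b)
    (hb1 : b ≤ 1) (hhb : ∀ x ≥ b, h x = 0) (hfc : Continuous f)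
    (hf : ∀ ρ > (0 : ℝ), ∀ α : ℝ, f (ρ * cos α, ρ * sin α) = h ρ * cos (ℓ * α))
    (φ : ℝ) {ψ : ℝ} (hψ : ψ ∈ Ioo 0 (π / 2)) :
    IntegrableOn (fun ρ => h ρ * ρ / √(ρ ^ 2 - sin ψ ^ 2) *
        (cos (ℓ * (φ - ψ + arcsin (sin ψ / ρ))) + cos (ℓ * (φ - ψ + (π - arcsin (sin ψ / ρ))))))
      (Ioo (sin ψ) 1) ∧
    ∫ r in Ioi 0, f (rayPoint φ (φ - ψ) r) =
      ∫ ρ in Ioo (sin ψ) 1, h ρ * ρ / √(ρ ^ 2 - sin ψ ^ 2) *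
        (cos (ℓ * (φ - ψ + arcsin (sin ψ / ρ))) +
          cos (ℓ * (φ - ψ + (π - arcsin (sin ψ / ρ))))) := by
  obtain ⟨hψ0, hψ1⟩ := hψ
  have hs : 0 < sin ψ := sin_pos_of_pos_of_lt_pi hψ0 (by linarith [pi_pos])
  have hc : 0 < cos ψ := cos_pos_of_mem_Ioo ⟨by linarith [pi_pos], hψ1⟩
  set G := fun r => f (rayPoint φ (φ - ψ) r) with hG
  set F := fun ρ => h ρ * ρ / √(ρ ^ 2 - sin ψ ^ 2) *
    (cos (ℓ * (φ - ψ + arcsin (sin ψ / ρ))) + cos (ℓ * (φ - ψ + (π - arcsin (sin ψ / ρ)))))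
  -- outside `0 < r < 2 cos ψ` the ray point lies outside the unit disc
  have hG0 : ∀ r ∉ Ioo 0 (2 * cos ψ), G r = 0 := by
    intro r hr
    refine apply_eq_zero_of_sq_le hf hb hhb ?_
    rw [rayPoint_normSq]
    rw [mem_Ioo, not_and_or, not_lt, not_lt] at hr
    have : 0 ≤ r * (r - 2 * cos ψ) := by rcases hr with hr | hr <;> nlinarith
    nlinarith
  have hGint : Integrable G := by
    exact (hfc.comp (by unfold rayPoint; fun_prop)).integrable_of_hasCompactSupport
      (HasCompactSupport.intro isCompact_Icc fun r hr =>
        hG0 r fun hr' => hr (Ioo_subset_Icc_self hr'))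
  have hvals : EqOn (fun ρ => (ρ / √(ρ ^ 2 - sin ψ ^ 2)) •
      (G (cos ψ - √(ρ ^ 2 - sin ψ ^ 2)) + G (cos ψ + √(ρ ^ 2 - sin ψ ^ 2)))) F (Ioi (sin ψ)) := by
    intro ρ hρ
    obtain ⟨h₁, h₂⟩ := apply_rayPoint_sqrt hf φ hs hρ
    simp only [hG, F, smul_eq_mul, h₁, h₂]
    ring
  have hF : ∀ ρ ∈ Ioi (sin ψ) \ Ioo (sin ψ) 1, F ρ = 0 := fun ρ hρ => by
    have h1 : 1 ≤ ρ := not_lt.1 fun h1 => hρ.2 ⟨hρ.1, h1⟩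
    simp only [F, hhb ρ (hb1.trans h1), zero_mul, zero_div]
  obtain ⟨hint, heq⟩ := integrableOn_Ioi_sqrt_sq_sub_sq_and_integral_eq hs.le
    (g := fun w => G (cos ψ - w) + G (cos ψ + w))
    ((hGint.comp_sub_left (cos ψ)).add (hGint.comp_add_left (cos ψ))).integrableOn
  refine ⟨(hint.congr_fun hvals measurableSet_Ioi).mono_set Ioo_subset_Ioi_self, ?_⟩
  calc ∫ r in Ioi 0, G r
      = ∫ r, G r :=
        setIntegral_eq_integral_of_forall_compl_eq_zero fun r hr => hG0 r fun hr' => hr hr'.1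
    _ = ∫ w in Ioi 0, (G (cos ψ - w) + G (cos ψ + w)) :=
      integral_eq_integral_Ioi_add_reflect hGint _
    _ = ∫ ρ in Ioi (sin ψ), F ρ := by
      rw [← heq]
      exact setIntegral_congr_fun measurableSet_Ioi hvals
    _ = ∫ ρ in Ioo (sin ψ) 1, F ρ :=
      setIntegral_eq_of_subset_of_forall_sdiff_eq_zero measurableSet_Ioi Ioo_subset_Ioi_self hF

theorem stmt17_general (ℓ : ℕ) (h : ℝ → ℝ)
    (b : ℝ) (hb : b ∈ Set.Ioo (0 : ℝ) 1) (hhb : ∀ x ≥ b, h x = 0)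
    (f : ℝ × ℝ → ℝ) (hfc : Continuous f)
    (hf : ∀ ρ > (0 : ℝ), ∀ α : ℝ,
      f (ρ * Real.cos α, ρ * Real.sin α) = h ρ * Real.cos ((ℓ : ℝ) * α))
    (φ : ℝ) (ψ : ℝ) (hψ : ψ ∈ Set.Ioo 0 (Real.pi / 2)) :
    vLine f φ ψ =
      2 * Real.cos ((ℓ : ℝ) * φ) *
        ∫ ρ in (Real.sin ψ)..1,
          h ρ * ρ * K2 ℓ (Real.sin ψ) ρ / Real.sqrt (ρ ^ 2 - Real.sin ψ ^ 2) := by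
  obtain ⟨hint₁, heq₁⟩ := integral_rayPoint_eq hb.1 hb.2.le hhb hfc hf φ hψ
  obtain ⟨hint₂, heq₂⟩ := integral_rayPoint_eq hb.1 hb.2.le hhb hfc hf (-φ) hψ
  have hreflect : ∀ r, f (rayPoint φ (φ + ψ) r) = f (rayPoint (-φ) (-φ - ψ) r) := fun r => by
    rw [rayPoint_neg, apply_neg_snd hf]
  have harcsin : arcsin (sin ψ) = ψ :=
    arcsin_sin (by linarith [hψ.1, pi_pos]) (by linarith [hψ.2, pi_pos])
  change (∫ r in Ioi 0, f (rayPoint φ (φ - ψ) r)) + ∫ r in Ioi 0, f (rayPoint φ (φ + ψ) r) = _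
  simp only [hreflect]
  rw [heq₁, heq₂, ← integral_add hint₁ hint₂, intervalIntegral.integral_of_le (sin_le_one ψ),
    integral_Ioc_eq_integral_Ioo, ← integral_const_mul]
  refine setIntegral_congr_fun measurableSet_Ioo fun ρ _ => ?_
  rw [K2, harcsin, ← mul_add, cos_add_cos_pi_sub_add_neg]
  ring

theorem stmt17 (ℓ : ℕ) (h : ℝ → ℝ) (hh : Continuous h) (hh0 : h 0 = 0)
    (b : ℝ) (hb : b ∈ Set.Ioo (0 : ℝ) 1) (hhb : ∀ x ≥ b, h x = 0)
    (f : ℝ × ℝ → ℝ) (hfc : Continuous f)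
    (hf : ∀ ρ > (0 : ℝ), ∀ α : ℝ,
      f (ρ * Real.cos α, ρ * Real.sin α) = h ρ * Real.cos ((ℓ : ℝ) * α))
    (hf0 : f (0, 0) = 0)
    (φ : ℝ) (ψ : ℝ) (hψ : ψ ∈ Set.Ioo 0 (Real.pi / 2)) :
    vLine f φ ψ =
      2 * Real.cos ((ℓ : ℝ) * φ) *
        ∫ ρ in (Real.sin ψ)..1,
          h ρ * ρ * K2 ℓ (Real.sin ψ) ρ / Real.sqrt (ρ ^ 2 - Real.sin ψ ^ 2) :=
  stmt17_general ℓ h b hb hhb f hfc hf φ ψ hψ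
end

section
/- Let a < b, let F : Δ_{a,b} → ℝ be continuous, let g : [a,b] → ℝ be continuous, and suppose f : [a,b] → ℝ is continuous and satisfies the generalized Abel equation ∫_a^t F(t,s)·f(s)/√(t−s) ds = g(t) for all t ∈ [a,b]. Then for all u ∈ [a,b]: ∫_a^u V(u,s)·f(s) ds = ∫_a^u g(t)/√(u−t) dt, where V(u,s) = ∫₀^1 F(s + (u−s)r, s) / √(r(1−r)) dr. -/
open MeasureTheory Real

/-- The closed triangle `Δ_{a,b} = {(t,s) : a ≤ s ≤ t ≤ b}`. -/
def triangle (a b : ℝ) : Set (ℝ × ℝ) :=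
  {p : ℝ × ℝ | a ≤ p.2 ∧ p.2 ≤ p.1 ∧ p.1 ≤ b}

lemma aux_rpow_eq (z : ℝ) (hz : 0 ≤ z) : z ^ (-(1/2) : ℝ) = 1 / Real.sqrt z := by
  rw [Real.rpow_neg hz, Real.sqrt_eq_rpow]; simp

lemma aux_int_sqrt_inv (c d : ℝ) :
    IntegrableOn (fun x => 1 / Real.sqrt (d - x)) (Set.Ioc c d) volume := by
  rcases le_or_gt c d with hcd | hcd
  · have h1 : IntervalIntegrable (fun x : ℝ => x ^ (-(1/2) : ℝ)) volume 0 (d - c) :=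
      intervalIntegral.intervalIntegrable_rpow' (by norm_num)
    have h2 := h1.comp_sub_left d
    simp only [sub_sub_cancel, sub_zero] at h2
    have h3 : IntegrableOn (fun x => (d - x) ^ (-(1/2) : ℝ)) (Set.Ioc c d) volume := h2.2
    exact h3.congr_fun (fun x hx => aux_rpow_eq _ (by linarith [hx.2])) measurableSet_Ioc
  · simp [Set.Ioc_eq_empty (not_lt.mpr hcd.le), MeasureTheory.integrableOn_empty]

lemma aux_val_sqrt_inv (c d : ℝ) (hcd : c ≤ d) :
    ∫ x in Set.Ioc c d, 1 / Real.sqrt (d - x) = 2 * Real.sqrt (d - c) := by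
  rw [← intervalIntegral.integral_of_le hcd]
  have h1 : ∀ x ∈ Set.uIcc c d, 1 / Real.sqrt (d - x) = (fun y : ℝ => y ^ (-(1/2) : ℝ)) (d - x) := by
    intro x hx
    rw [Set.uIcc_of_le hcd] at hx
    exact (aux_rpow_eq _ (by linarith [hx.2])).symm
  rw [intervalIntegral.integral_congr h1, intervalIntegral.integral_comp_sub_left
    (fun y : ℝ => y ^ (-(1/2) : ℝ)) d, sub_self]
  rw [integral_rpow (Or.inl (by norm_num))]
  have : (-(1/2) : ℝ) + 1 = 1/2 := by norm_num
  rw [this, Real.zero_rpow (by norm_num), Real.sqrt_eq_rpow]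
  ring

lemma aux_sqrt_prod (c : ℝ) (hc : 0 < c) (r : ℝ) :
    Real.sqrt (c * r) * Real.sqrt (c * (1 - r)) = c * Real.sqrt (r * (1 - r)) := by
  rcases le_or_gt 0 r with hr0 | hr0
  · rcases le_or_gt r 1 with hr1 | hr1
    · rw [Real.sqrt_mul hc.le, Real.sqrt_mul hc.le, Real.sqrt_mul hr0]
      conv_rhs => rw [← Real.sq_sqrt hc.le]
      ring
    · have h1 : Real.sqrt (c * (1 - r)) = 0 :=
        Real.sqrt_eq_zero_of_nonpos (by nlinarith)
      have h2 : Real.sqrt (r * (1 - r)) = 0 :=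
        Real.sqrt_eq_zero_of_nonpos (by nlinarith)
      rw [h1, h2]; ring
  · have h1 : Real.sqrt (c * r) = 0 :=
      Real.sqrt_eq_zero_of_nonpos (by nlinarith)
    have h2 : Real.sqrt (r * (1 - r)) = 0 :=
      Real.sqrt_eq_zero_of_nonpos (by nlinarith)
    rw [h1, h2]; ring

lemma aux_div_identity (A Z c : ℝ) (hc : c ≠ 0) : c * (A / (c * Z)) = A / Z := by
  rcases eq_or_ne Z 0 with hZ | hZ
  · simp [hZ]
  · field_simp

lemma aux_null_diag : (volume.prod volume) {p : ℝ × ℝ | p.1 = p.2} = 0 := by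
  rw [MeasureTheory.Measure.measure_prod_null (measurableSet_eq_fun measurable_fst measurable_snd)]
  filter_upwards with x
  have h : (Prod.mk x ⁻¹' {p : ℝ × ℝ | p.1 = p.2}) = {x} := by ext y; simp [eq_comm]
  simp [h]

lemma aux_null_line (u : ℝ) : (volume.prod volume) {p : ℝ × ℝ | p.1 = u} = 0 := by
  rw [MeasureTheory.Measure.measure_prod_null (measurableSet_eq_fun measurable_fst measurable_const)]
  have h : ∀ᵐ x : ℝ, x ≠ u := by
    rw [ae_iff]
    have : {x : ℝ | ¬x ≠ u} = {u} := by ext y; simp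
    simp [this]
  filter_upwards [h] with x hx
  have h2 : (Prod.mk x ⁻¹' {p : ℝ × ℝ | p.1 = u}) = ∅ := by ext y; simp [hx]
  simp [h2]

/-- Reduction of a generalized Abel equation to a first kind Volterra equation with
kernel `V(u,s) = ∫₀¹ F(s + (u-s)r, s) / √(r(1-r)) dr`. -/
theorem stmt18 (a b : ℝ) (hab : a < b) (F : ℝ × ℝ → ℝ)
    (hF : ContinuousOn F (triangle a b))
    (g : ℝ → ℝ) (hg : ContinuousOn g (Set.Icc a b))
    (f : ℝ → ℝ) (hf : ContinuousOn f (Set.Icc a b))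
    (heq : ∀ t ∈ Set.Icc a b,
      ∫ s in a..t, F (t, s) * f s / Real.sqrt (t - s) = g t)
    (u : ℝ) (hu : u ∈ Set.Icc a b) :
    (∫ s in a..u,
        (∫ r in (0 : ℝ)..1, F (s + (u - s) * r, s) / Real.sqrt (r * (1 - r))) * f s) =
      ∫ t in a..u, g t / Real.sqrt (u - t) := by
  obtain ⟨hau, hub⟩ := hu
  rcases eq_or_lt_of_le hau with rfl | hau
  · simp
  -- now a < u
  set K : ℝ × ℝ → ℝ :=
    fun p => F p * f p.2 / (Real.sqrt (p.1 - p.2) * Real.sqrt (u - p.1)) with hKdef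
  set R : Set (ℝ × ℝ) := {p | a < p.2 ∧ p.2 ≤ p.1 ∧ p.1 ≤ u} with hRdef
  set W : ℝ → ℝ → ℝ := fun t s => R.indicator K (t, s) with hWdef
  -- R is inside the triangle
  have hRsub : R ⊆ triangle a b := by
    rintro ⟨t, s⟩ ⟨h1, h2, h3⟩
    exact ⟨h1.le, h2, h3.trans hub⟩
  have hRmeas : MeasurableSet R := by
    have : R = {p : ℝ × ℝ | a < p.2} ∩ ({p | p.2 ≤ p.1} ∩ {p | p.1 ≤ u}) := by
      ext p; simp [hRdef, and_assoc]
    rw [this]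
    exact (measurableSet_lt measurable_const measurable_snd).inter
      ((measurableSet_le measurable_snd measurable_fst).inter
        (measurableSet_le measurable_fst measurable_const))
  -- bound on F * f on R
  have htri : IsCompact (triangle a b) := by
    have hclosed : IsClosed (triangle a b) := by
      have : triangle a b
          = {p : ℝ × ℝ | a ≤ p.2} ∩ ({p | p.2 ≤ p.1} ∩ {p | p.1 ≤ b}) := by
        ext p; simp [triangle, and_assoc]
      rw [this]
      exact (isClosed_le continuous_const continuous_snd).inter
        ((isClosed_le continuous_snd continuous_fst).inter
          (isClosed_le continuous_fst continuous_const))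
    refine IsCompact.of_isClosed_subset ((isCompact_Icc (a := a) (b := b)).prod (isCompact_Icc (a := a) (b := b))) hclosed ?_
    · rintro ⟨t, s⟩ ⟨h1, h2, h3⟩
      exact ⟨⟨h1.trans h2, h3⟩, h1, h2.trans h3⟩
  obtain ⟨M₁, hM₁⟩ := htri.exists_bound_of_continuousOn hF
  obtain ⟨M₂, hM₂⟩ := isCompact_Icc.exists_bound_of_continuousOn hf
  set M : ℝ := (max M₁ 0) * (max M₂ 0) with hMdef
  have hM0 : 0 ≤ M := mul_nonneg (le_max_right _ _) (le_max_right _ _)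
  have hKbound : ∀ p ∈ R, |K p| ≤ M / (Real.sqrt (p.1 - p.2) * Real.sqrt (u - p.1)) := by
    rintro ⟨t, s⟩ hp
    have hFf : |F (t, s) * f s| ≤ M := by
      rw [abs_mul]
      have h1 : |F (t, s)| ≤ max M₁ 0 :=
        le_trans (by simpa using hM₁ _ (hRsub hp)) (le_max_left _ _)
      have h2 : |f s| ≤ max M₂ 0 := by
        have hs : s ∈ Set.Icc a b := ⟨hp.1.le, (hp.2.1.trans hp.2.2).trans hub⟩
        exact le_trans (by simpa using hM₂ _ hs) (le_max_left _ _)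
      exact mul_le_mul h1 h2 (abs_nonneg _) (le_max_right _ _)
    have hden : 0 ≤ Real.sqrt (t - s) * Real.sqrt (u - t) :=
      mul_nonneg (Real.sqrt_nonneg _) (Real.sqrt_nonneg _)
    rw [hKdef]
    simp only [abs_div, abs_of_nonneg hden]
    rw [div_eq_mul_inv, div_eq_mul_inv]
    exact mul_le_mul_of_nonneg_right hFf (inv_nonneg.mpr hden)
  -- open approximation of R and a.e.-strong-measurability of the indicator
  set R₀ : Set (ℝ × ℝ) := {p | a < p.2 ∧ p.2 < p.1 ∧ p.1 < u} with hR0def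
  have hR0open : IsOpen R₀ := by
    have : R₀ = {p : ℝ × ℝ | a < p.2} ∩ ({p | p.2 < p.1} ∩ {p | p.1 < u}) := by
      ext p; simp [hR0def, and_assoc]
    rw [this]
    exact (isOpen_lt continuous_const continuous_snd).inter
      ((isOpen_lt continuous_snd continuous_fst).inter
        (isOpen_lt continuous_fst continuous_const))
  have hcontK : ContinuousOn K R₀ := by
    have hFc : ContinuousOn F R₀ :=
      hF.mono (fun p hp => ⟨hp.1.le, hp.2.1.le, hp.2.2.le.trans hub⟩)
    have hfc : ContinuousOn (fun p : ℝ × ℝ => f p.2) R₀ :=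
      hf.comp continuous_snd.continuousOn
        (fun p hp => ⟨hp.1.le, hp.2.1.le.trans (hp.2.2.le.trans hub)⟩)
    have hden : ContinuousOn
        (fun p : ℝ × ℝ => Real.sqrt (p.1 - p.2) * Real.sqrt (u - p.1)) R₀ :=
      (((continuous_fst.sub continuous_snd).sqrt).mul
        ((continuous_const.sub continuous_fst).sqrt)).continuousOn
    refine (hFc.mul hfc).div hden ?_
    rintro ⟨t, s⟩ hp
    have h1 : 0 < Real.sqrt (t - s) := Real.sqrt_pos.mpr (sub_pos.mpr hp.2.1)
    have h2 : 0 < Real.sqrt (u - t) := Real.sqrt_pos.mpr (sub_pos.mpr hp.2.2)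
    exact ne_of_gt (mul_pos h1 h2)
  have hWm : AEStronglyMeasurable (Set.indicator R K) (volume.prod volume) := by
    have h0 : AEStronglyMeasurable (Set.indicator R₀ K) (volume.prod volume) :=
      (aestronglyMeasurable_indicator_iff hR0open.measurableSet).mpr
        (hcontK.aestronglyMeasurable hR0open.measurableSet)
    refine h0.congr ?_
    have hnull : (volume.prod volume) ({p : ℝ × ℝ | p.1 = p.2} ∪ {p | p.1 = u}) = 0 :=
      measure_union_null aux_null_diag (aux_null_line u)
    have hae : ∀ᵐ p : ℝ × ℝ ∂(volume.prod volume),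
        p ∉ ({q : ℝ × ℝ | q.1 = q.2} ∪ {q | q.1 = u}) := by
      rw [ae_iff]
      convert hnull using 2
      ext p; simp; tauto
    have hR0subR : R₀ ⊆ R := fun p hp => ⟨hp.1, hp.2.1.le, hp.2.2.le⟩
    filter_upwards [hae] with p hp
    by_cases hpR : p ∈ R₀
    · rw [Set.indicator_of_mem hpR, Set.indicator_of_mem (hR0subR hpR)]
    · rw [Set.indicator_of_notMem hpR]
      have hnR : p ∉ R := by
        rintro ⟨h1, h2, h3⟩
        rcases lt_or_eq_of_le h2 with h2' | h2'
        · rcases lt_or_eq_of_le h3 with h3' | h3'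
          · exact hpR ⟨h1, h2', h3'⟩
          · exact hp (Or.inr h3')
        · exact hp (Or.inl h2'.symm)
      rw [Set.indicator_of_notMem hnR]
  have hWum : AEStronglyMeasurable (Function.uncurry W) (volume.prod volume) := hWm
  -- sections of W
  have hWzero_t : ∀ t, t ∉ Set.Ioc a u → (fun s => W t s) = fun _ => 0 := by
    intro t ht
    funext s
    show R.indicator K (t, s) = 0
    apply Set.indicator_of_notMem
    rintro ⟨h1, h2, h3⟩
    exact ht ⟨lt_of_lt_of_le h1 h2, h3⟩
  have hWind_t : ∀ t ∈ Set.Ioc a u,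
      (fun s => W t s) = (Set.Ioc a t).indicator (fun s => K (t, s)) := by
    intro t ht
    funext s
    show R.indicator K (t, s) = _
    by_cases hs : s ∈ Set.Ioc a t
    · rw [Set.indicator_of_mem hs, Set.indicator_of_mem]
      exact ⟨hs.1, hs.2, ht.2⟩
    · rw [Set.indicator_of_notMem hs, Set.indicator_of_notMem]
      rintro ⟨h1, h2, h3⟩; exact hs ⟨h1, h2⟩
  -- integrability of the t-sections
  have hKsec : ∀ t ∈ Set.Ioc a u, IntegrableOn (fun s => K (t, s)) (Set.Ioc a t) volume := by
    intro t ht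
    rcases eq_or_lt_of_le ht.2 with htu | htu
    · have hz : (fun s => K (t, s)) = fun _ => (0:ℝ) := by
        funext s
        show F (t, s) * f s / (Real.sqrt (t - s) * Real.sqrt (u - t)) = 0
        rw [← htu, sub_self, Real.sqrt_zero, mul_zero, div_zero]
      rw [hz]
      exact integrableOn_zero
    · refine Integrable.mono'
        (g := fun s => (M / Real.sqrt (u - t)) * (1 / Real.sqrt (t - s))) ?_ ?_ ?_
      · exact (aux_int_sqrt_inv a t).const_mul _
      · rw [← Measure.restrict_congr_set (Ioo_ae_eq_Ioc (a := a) (b := t))]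
        refine ContinuousOn.aestronglyMeasurable ?_ measurableSet_Ioo
        have hFc : ContinuousOn (fun s => F (t, s)) (Set.Ioo a t) := by
          refine hF.comp (Continuous.continuousOn (by continuity)) ?_
          intro s hs; exact ⟨hs.1.le, hs.2.le, ht.2.trans hub⟩
        have hfc : ContinuousOn f (Set.Ioo a t) :=
          hf.mono (fun s hs => ⟨hs.1.le, hs.2.le.trans (ht.2.trans hub)⟩)
        have hden : ContinuousOn
            (fun s : ℝ => Real.sqrt (t - s) * Real.sqrt (u - t)) (Set.Ioo a t) :=
          (((continuous_const.sub continuous_id).sqrt).mul continuous_const).continuousOn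
        refine ((hFc.mul hfc).div hden ?_ : ContinuousOn
          (fun s => F (t, s) * f s / (Real.sqrt (t - s) * Real.sqrt (u - t))) (Set.Ioo a t))
        intro s hs
        have h1 : 0 < Real.sqrt (t - s) := Real.sqrt_pos.mpr (sub_pos.mpr hs.2)
        have h2 : 0 < Real.sqrt (u - t) := Real.sqrt_pos.mpr (sub_pos.mpr htu)
        exact ne_of_gt (mul_pos h1 h2)
      · rw [ae_restrict_iff' measurableSet_Ioc]
        filter_upwards with s hs
        have hb := hKbound (t, s) ⟨hs.1, hs.2, ht.2⟩
        calc ‖K (t, s)‖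
            ≤ M / (Real.sqrt (t - s) * Real.sqrt (u - t)) := by
              simpa [Real.norm_eq_abs] using hb
          _ = (M / Real.sqrt (u - t)) * (1 / Real.sqrt (t - s)) := by ring
  have hsec : ∀ t, Integrable (fun s => W t s) volume := by
    intro t
    by_cases ht : t ∈ Set.Ioc a u
    · rw [hWind_t t ht, integrable_indicator_iff measurableSet_Ioc]
      exact hKsec t ht
    · rw [hWzero_t t ht]
      exact integrable_zero _ _ _
  -- integrability of the norm-integral
  have hN : Integrable (fun t => ∫ s, ‖W t s‖) volume := by
    have hNm : AEStronglyMeasurable (fun t => ∫ s, ‖W t s‖) volume :=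
      hWum.norm.integral_prod_right'
    refine Integrable.mono'
      (g := (Set.Ioc a u).indicator
        (fun t => (2 * Real.sqrt (u - a) * M) * (1 / Real.sqrt (u - t)))) ?_ hNm ?_
    · rw [integrable_indicator_iff measurableSet_Ioc]
      exact (aux_int_sqrt_inv a u).const_mul _
    · filter_upwards with t
      have hnonneg : 0 ≤ ∫ s, ‖W t s‖ := integral_nonneg (fun s => norm_nonneg _)
      rw [Real.norm_eq_abs, abs_of_nonneg hnonneg]
      by_cases ht : t ∈ Set.Ioc a u
      · rw [Set.indicator_of_mem ht]
        have hWnorm : ∀ s, ‖W t s‖ = (Set.Ioc a t).indicator (fun s => ‖K (t, s)‖) s := by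
          intro s
          rw [congrFun (hWind_t t ht) s, ← norm_indicator_eq_indicator_norm]
        calc (∫ s, ‖W t s‖) = ∫ s in Set.Ioc a t, ‖K (t, s)‖ := by
              simp only [hWnorm]
              exact MeasureTheory.integral_indicator measurableSet_Ioc
          _ ≤ ∫ s in Set.Ioc a t, (M / Real.sqrt (u - t)) * (1 / Real.sqrt (t - s)) := by
              refine setIntegral_mono_on ((hKsec t ht).norm)
                ((aux_int_sqrt_inv a t).const_mul _) measurableSet_Ioc ?_
              intro s hs
              have hb := hKbound (t, s) ⟨hs.1, hs.2, ht.2⟩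
              calc ‖K (t, s)‖
                  ≤ M / (Real.sqrt (t - s) * Real.sqrt (u - t)) := by
                    simpa [Real.norm_eq_abs] using hb
                _ = (M / Real.sqrt (u - t)) * (1 / Real.sqrt (t - s)) := by ring
          _ = (M / Real.sqrt (u - t)) * (2 * Real.sqrt (t - a)) := by
              rw [MeasureTheory.integral_const_mul, aux_val_sqrt_inv a t ht.1.le]
          _ ≤ (2 * Real.sqrt (u - a) * M) * (1 / Real.sqrt (u - t)) := by
              have h1 : Real.sqrt (t - a) ≤ Real.sqrt (u - a) :=
                Real.sqrt_le_sqrt (by linarith [ht.2])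
              have h2 : 0 ≤ M / Real.sqrt (u - t) :=
                div_nonneg hM0 (Real.sqrt_nonneg _)
              calc (M / Real.sqrt (u - t)) * (2 * Real.sqrt (t - a))
                  ≤ (M / Real.sqrt (u - t)) * (2 * Real.sqrt (u - a)) := by
                    refine mul_le_mul_of_nonneg_left (by linarith) h2
                _ = (2 * Real.sqrt (u - a) * M) * (1 / Real.sqrt (u - t)) := by ring
      · rw [Set.indicator_of_notMem ht]
        have hz := hWzero_t t ht
        have hz' : ∀ s, W t s = 0 := fun s => congrFun hz s
        simp [hz']
  have hWint : Integrable (Function.uncurry W) (volume.prod volume) := by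
    rw [MeasureTheory.integrable_prod_iff hWum]
    exact ⟨Filter.Eventually.of_forall hsec, hN⟩
  have hswap : (∫ t, ∫ s, W t s) = ∫ s, ∫ t, W t s :=
    MeasureTheory.integral_integral_swap hWint
  -- RHS chain
  have hRHS : (∫ t in a..u, g t / Real.sqrt (u - t)) = ∫ t, ∫ s, W t s := by
    rw [intervalIntegral.integral_of_le hau.le]
    have h1 : ∀ t ∈ Set.Ioc a u, g t / Real.sqrt (u - t) = ∫ s, W t s := by
      intro t ht
      have htab : t ∈ Set.Icc a b := ⟨ht.1.le, ht.2.trans hub⟩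
      rw [← heq t htab]
      conv_rhs => rw [hWind_t t ht]
      rw [MeasureTheory.integral_indicator measurableSet_Ioc,
        ← intervalIntegral.integral_of_le ht.1.le, ← intervalIntegral.integral_div]
      refine intervalIntegral.integral_congr fun s _ => ?_
      show F (t, s) * f s / Real.sqrt (t - s) / Real.sqrt (u - t)
        = F (t, s) * f s / (Real.sqrt (t - s) * Real.sqrt (u - t))
      rw [div_div]
    rw [MeasureTheory.setIntegral_congr_fun measurableSet_Ioc h1,
      ← MeasureTheory.integral_indicator measurableSet_Ioc]
    congr 1
    funext t
    by_cases ht : t ∈ Set.Ioc a u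
    · rw [Set.indicator_of_mem ht]
    · rw [Set.indicator_of_notMem ht, hWzero_t t ht]
      simp
  -- LHS chain
  have hLHS : (∫ s in a..u,
      (∫ r in (0:ℝ)..1, F (s + (u - s) * r, s) / Real.sqrt (r * (1 - r))) * f s)
      = ∫ s, ∫ t, W t s := by
    rw [intervalIntegral.integral_of_le hau.le,
      MeasureTheory.integral_Ioc_eq_integral_Ioo]
    have h1 : ∀ s ∈ Set.Ioo a u,
        (∫ r in (0:ℝ)..1, F (s + (u - s) * r, s) / Real.sqrt (r * (1 - r))) * f s
        = ∫ t, W t s := by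
      intro s hs
      have hus : 0 < u - s := sub_pos.mpr hs.2
      have hWind_s : (fun t => W t s) = (Set.Icc s u).indicator (fun t => K (t, s)) := by
        funext t
        show R.indicator K (t, s) = _
        by_cases ht : t ∈ Set.Icc s u
        · rw [Set.indicator_of_mem ht, Set.indicator_of_mem]
          exact ⟨hs.1, ht.1, ht.2⟩
        · rw [Set.indicator_of_notMem ht, Set.indicator_of_notMem]
          rintro ⟨h1', h2', h3'⟩; exact ht ⟨h2', h3'⟩
      conv_rhs => rw [hWind_s]
      rw [MeasureTheory.integral_indicator measurableSet_Icc,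
        MeasureTheory.integral_Icc_eq_integral_Ioc,
        ← intervalIntegral.integral_of_le hs.2.le]
      have hsub : ∀ r : ℝ, F (s + (u - s) * r, s) / Real.sqrt (r * (1 - r)) * f s
          = (u - s) * ((fun t => K (t, s)) ((u - s) * r + s)) := by
        intro r
        show _ = (u - s) * (F ((u - s) * r + s, s) * f s /
          (Real.sqrt ((u - s) * r + s - s) * Real.sqrt (u - ((u - s) * r + s))))
        have e2 : (u - s) * r + s - s = (u - s) * r := by ring
        have e3 : u - ((u - s) * r + s) = (u - s) * (1 - r) := by ring
        have e1 : (u - s) * r + s = s + (u - s) * r := by ring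
        rw [e2, e3, e1, aux_sqrt_prod (u - s) hus r, div_mul_eq_mul_div]
        exact (aux_div_identity _ _ _ hus.ne').symm
      rw [← intervalIntegral.integral_mul_const,
        intervalIntegral.integral_congr (fun r _ => hsub r),
        intervalIntegral.integral_const_mul,
        intervalIntegral.integral_comp_mul_add (fun t => K (t, s)) hus.ne' s]
      simp only [mul_zero, zero_add, mul_one, sub_add_cancel, smul_eq_mul]
      rw [← mul_assoc, mul_inv_cancel₀ hus.ne', one_mul]
    rw [MeasureTheory.setIntegral_congr_fun measurableSet_Ioo h1,
      ← MeasureTheory.integral_Ioc_eq_integral_Ioo,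
      ← MeasureTheory.integral_indicator measurableSet_Ioc]
    congr 1
    funext s
    by_cases hsm : s ∈ Set.Ioc a u
    · rw [Set.indicator_of_mem hsm]
    · rw [Set.indicator_of_notMem hsm]
      have hz' : ∀ t, W t s = 0 := by
        intro t
        show R.indicator K (t, s) = 0
        apply Set.indicator_of_notMem
        rintro ⟨h1', h2', h3'⟩
        exact hsm ⟨h1', h2'.trans h3'⟩
      simp [hz']
  rw [hLHS, hRHS]
  exact hswap.symm
end

section
/- Let a < b and let F : Δ_{a,b} → ℝ be continuously differentiable on Δ_{a,b}. Define V : Δ_{a,b} → ℝ by V(u,s) = ∫₀^1 F(s + (u−s)r, s) / √(r(1−r)) dr. Then: (i) V(s,s) = π·F(s,s) for every s ∈ [a,b]; and (ii) for every s ∈ [a,b), lim_{u→s⁺} (V(u,s) − V(s,s))/(u−s) = (π/2)·∂₁F(s,s), where ∂₁F denotes the partial derivative of F with respect to its first argument. -/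
open MeasureTheory Real

/-- The kernel `V(u,s) = ∫₀¹ F(s + (u-s)r, s) / √(r(1-r)) dr` of the Volterra equation
obtained from a generalized Abel equation with kernel `F`. -/
noncomputable def Vker (F : ℝ × ℝ → ℝ) (u s : ℝ) : ℝ :=
  ∫ r in (0 : ℝ)..1, F (s + (u - s) * r, s) / Real.sqrt (r * (1 - r))

/-! The weight `w(r) = 1/√(r(1-r))` has antiderivative `arcsin (2r - 1)`, so `∫₀¹ w = π`, and the
symmetry `r ↦ 1 - r` gives `∫₀¹ r w(r) dr = π/2`; part (i) is the first identity. For (ii), the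
difference quotient is `∫₀¹ (F(s + (u-s)r, s) - F(s,s))/(u-s) · w(r) dr`. Since `F` is `C¹` on the
compact convex triangle it is `K`-Lipschitz there, so the integrand is dominated by `K w(r)`, and it
tends pointwise to `r ∂₁F(s,s) w(r)`; dominated convergence gives the limit `(π/2) ∂₁F(s,s)`. -/

open Set Filter Topology
open scoped NNReal

theorem convex_triangle (a b : ℝ) : Convex ℝ (triangle a b) := by
  rintro x ⟨hxa, hx, hxb⟩ y ⟨hya, hy, hyb⟩ p q hp hq hpq
  obtain rfl : q = 1 - p := by linarith
  simp only [triangle, mem_ofPred_eq, Prod.fst_add, Prod.snd_add, Prod.smul_fst, Prod.smul_snd,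
    smul_eq_mul]
  refine ⟨?_, ?_, ?_⟩ <;> nlinarith

theorem isCompact_triangle (a b : ℝ) : IsCompact (triangle a b) := by
  refine (isCompact_Icc.prod isCompact_Icc).of_isClosed_subset ?_
    (fun p ⟨ha, hp, hb⟩ => ⟨⟨ha.trans hp, hb⟩, ⟨ha, hp.trans hb⟩⟩)
  exact (isClosed_le continuous_const continuous_snd).inter
    ((isClosed_le continuous_snd continuous_fst).inter
      (isClosed_le continuous_fst continuous_const))

noncomputable def arcsineWeight (r : ℝ) : ℝ := (√(r * (1 - r)))⁻¹

theorem arcsineWeight_nonneg (r : ℝ) : 0 ≤ arcsineWeight r := by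
  unfold arcsineWeight; positivity

theorem arcsineWeight_one_sub (r : ℝ) : arcsineWeight (1 - r) = arcsineWeight r := by
  rw [arcsineWeight, arcsineWeight, sub_sub_cancel, mul_comm]

theorem hasDerivAt_arcsin_two_mul_sub_one {r : ℝ} (hr : r ∈ Ioo (0 : ℝ) 1) :
    HasDerivAt (fun r => arcsin (2 * r - 1)) (arcsineWeight r) r := by
  obtain ⟨h0, h1⟩ := hr
  have hlin : HasDerivAt (fun r : ℝ => 2 * r - 1) 2 r := by
    simpa using ((hasDerivAt_id r).const_mul 2).sub_const 1
  refine ((hasDerivAt_arcsin (by linarith) (by linarith)).comp r hlin).congr_deriv ?_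
  have hsq : 1 - (2 * r - 1) ^ 2 = 2 ^ 2 * (r * (1 - r)) := by ring
  have hpos : 0 < √(r * (1 - r)) := sqrt_pos.2 (by nlinarith)
  rw [hsq, sqrt_mul (by positivity), sqrt_sq zero_le_two, arcsineWeight]
  field_simp

theorem continuous_arcsin_two_mul_sub_one : Continuous fun r : ℝ => arcsin (2 * r - 1) := by
  fun_prop

theorem intervalIntegrable_arcsineWeight : IntervalIntegrable arcsineWeight volume 0 1 := by
  rw [intervalIntegrable_iff_integrableOn_Ioc_of_le zero_le_one]
  exact intervalIntegral.integrableOn_deriv_of_nonneg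
    continuous_arcsin_two_mul_sub_one.continuousOn
    (fun r hr => hasDerivAt_arcsin_two_mul_sub_one hr) (fun r _ => arcsineWeight_nonneg r)

theorem integral_arcsineWeight : ∫ r in (0 : ℝ)..1, arcsineWeight r = π := by
  rw [intervalIntegral.integral_eq_sub_of_hasDerivAt_of_le zero_le_one
    continuous_arcsin_two_mul_sub_one.continuousOn
    (fun r hr => hasDerivAt_arcsin_two_mul_sub_one hr) intervalIntegrable_arcsineWeight]
  norm_num

theorem integral_mul_arcsineWeight : ∫ r in (0 : ℝ)..1, r * arcsineWeight r = π / 2 := by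
  have hint : IntervalIntegrable (fun r => r * arcsineWeight r) volume 0 1 :=
    intervalIntegrable_arcsineWeight.continuousOn_mul continuousOn_id
  have hsymm : ∫ r in (0 : ℝ)..1, (1 - r) * arcsineWeight r
      = ∫ r in (0 : ℝ)..1, r * arcsineWeight r := by
    simpa [arcsineWeight_one_sub] using
      intervalIntegral.integral_comp_sub_left (a := 0) (b := 1) (fun r => r * arcsineWeight r) 1
  have hsum : (∫ r in (0 : ℝ)..1, r * arcsineWeight r)
      + ∫ r in (0 : ℝ)..1, (1 - r) * arcsineWeight r = π := by
    rw [← intervalIntegral.integral_add hint (intervalIntegrable_arcsineWeight.continuousOn_mul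
      (g := fun r => 1 - r) (by fun_prop)), ← integral_arcsineWeight]
    congr 1 with r
    ring
  linarith

theorem HasDerivWithinAt.tendsto_slope_comp_affine {f : ℝ → ℝ} {f' s r : ℝ}
    (hf : HasDerivWithinAt f f' (Ioi s) s) (hr : 0 < r) :
    Tendsto (fun u => (f (s + (u - s) * r) - f s) / (u - s)) (𝓝[>] s) (𝓝 (f' * r)) := by
  have hline : HasDerivAt (fun u => s + (u - s) * r) r s := by
    simpa using (((hasDerivAt_id s).sub_const s).mul_const r).const_add s
  have hcomp : HasDerivWithinAt (fun u => f (s + (u - s) * r)) (f' * r) (Ioi s) s :=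
    hf.comp_of_eq s hline.hasDerivWithinAt
      (fun u hu => lt_add_of_pos_right s (mul_pos (sub_pos.2 hu) hr)) (by simp)
  refine ((hasDerivWithinAt_iff_tendsto_slope' (lt_irrefl s)).1 hcomp).congr fun u => ?_
  simp [slope_def_field]

theorem tendsto_slope_integral_comp_affine {f w : ℝ → ℝ} {s b f' : ℝ} {K : ℝ≥0} (hsb : s < b)
    (hw : IntervalIntegrable w volume 0 1) (hfK : LipschitzOnWith K f (Icc s b))
    (hf' : HasDerivWithinAt f f' (Ioi s) s) :
    Tendsto (fun u => ((∫ r in (0 : ℝ)..1, f (s + (u - s) * r) * w r)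
        - f s * ∫ r in (0 : ℝ)..1, w r) / (u - s))
      (𝓝[>] s) (𝓝 (f' * ∫ r in (0 : ℝ)..1, r * w r)) := by
  have hmaps : ∀ u ∈ Ioc s b, MapsTo (fun r => s + (u - s) * r) (uIcc 0 1) (Icc s b) := by
    rintro u ⟨hsu, hub⟩ r hr
    rw [uIcc_of_le zero_le_one] at hr
    constructor <;> nlinarith [hr.1, hr.2]
  have hcont : ∀ u ∈ Ioc s b, ContinuousOn (fun r => f (s + (u - s) * r)) (uIcc 0 1) :=
    fun u hu => hfK.continuousOn.comp (by fun_prop) (hmaps u hu)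
  have hquot : ∀ᶠ u in 𝓝[>] s, (∫ r in (0 : ℝ)..1, (f (s + (u - s) * r) - f s) / (u - s) * w r)
      = ((∫ r in (0 : ℝ)..1, f (s + (u - s) * r) * w r) - f s * ∫ r in (0 : ℝ)..1, w r)
        / (u - s) := by
    filter_upwards [Ioc_mem_nhdsGT hsb] with u hu
    rw [← intervalIntegral.integral_const_mul,
      ← intervalIntegral.integral_sub (hw.continuousOn_mul (hcont u hu)) (hw.const_mul _),
      ← intervalIntegral.integral_div]
    congr 1 with r
    ring
  rw [← intervalIntegral.integral_const_mul f']
  refine Tendsto.congr' hquot (intervalIntegral.tendsto_integral_filter_of_dominated_convergence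
    (fun r => K * ‖w r‖) ?_ ?_ (hw.norm.const_mul _) ?_)
  · filter_upwards [Ioc_mem_nhdsGT hsb] with u hu
    exact (hw.continuousOn_mul (((hcont u hu).sub continuousOn_const).div_const _)).def'
      |>.aestronglyMeasurable
  · filter_upwards [Ioc_mem_nhdsGT hsb] with u hu
    refine Eventually.of_forall fun r hr => ?_
    have hr' : r ∈ uIcc (0 : ℝ) 1 := uIoc_subset_uIcc hr
    have hus : 0 < u - s := sub_pos.2 hu.1
    have hlip := hfK.dist_le_mul _ (hmaps u hu hr') s (left_mem_Icc.2 hsb.le)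
    rw [uIcc_of_le zero_le_one] at hr'
    rw [Real.dist_eq, Real.dist_eq, add_sub_cancel_left, abs_mul, abs_of_pos hus,
      abs_of_nonneg hr'.1] at hlip
    rw [norm_mul, norm_div, Real.norm_of_nonneg hus.le, Real.norm_eq_abs]
    gcongr
    rw [div_le_iff₀ hus]
    calc |f (s + (u - s) * r) - f s| ≤ K * ((u - s) * r) := hlip
      _ ≤ K * (u - s) := by gcongr; exact mul_le_of_le_one_right hus.le hr'.2
  · refine Eventually.of_forall fun r hr => ?_
    rw [uIoc_of_le zero_le_one] at hr
    simpa only [mul_assoc] using (hf'.tendsto_slope_comp_affine hr.1).mul_const (w r)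

theorem Vker_eq_integral_mul_arcsineWeight (F : ℝ × ℝ → ℝ) (u s : ℝ) :
    Vker F u s = ∫ r in (0 : ℝ)..1, F (s + (u - s) * r, s) * arcsineWeight r := by
  simp only [Vker, arcsineWeight, div_eq_mul_inv]

theorem Vker_self (F : ℝ × ℝ → ℝ) (s : ℝ) : Vker F s s = π * F (s, s) := by
  simp only [Vker_eq_integral_mul_arcsineWeight, sub_self, zero_mul, add_zero]
  rw [intervalIntegral.integral_const_mul, integral_arcsineWeight, mul_comm]

theorem stmt19_general (a b : ℝ) (F : ℝ × ℝ → ℝ)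
    (hF : ContDiffOn ℝ 1 F (triangle a b)) :
    (∀ s ∈ Set.Icc a b, Vker F s s = Real.pi * F (s, s)) ∧
      ∀ s ∈ Set.Ico a b,
        Filter.Tendsto (fun u => (Vker F u s - Vker F s s) / (u - s))
          (nhdsWithin s (Set.Ioi s))
          (nhds (Real.pi / 2 * fderivWithin ℝ F (triangle a b) (s, s) (1, 0))) := by
  refine ⟨fun s _ => Vker_self F s, fun s ⟨has, hsb⟩ => ?_⟩
  obtain ⟨K, hK⟩ :=
    hF.exists_lipschitzOnWith one_ne_zero (convex_triangle a b) (isCompact_triangle a b)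
  have hmaps : MapsTo (fun x => (x, s)) (Icc s b) (triangle a b) := fun x hx => ⟨has, hx.1, hx.2⟩
  have hlip : LipschitzOnWith (K * 1) (fun x => F (x, s)) (Icc s b) :=
    hK.comp (LipschitzWith.prodMk_right s).lipschitzOnWith hmaps
  have hline : HasDerivAt (fun x : ℝ => (x, s)) ((1 : ℝ), (0 : ℝ)) s :=
    (hasDerivAt_id s).prodMk (hasDerivAt_const s s)
  have hderiv : HasDerivWithinAt (fun x => F (x, s))
      (fderivWithin ℝ F (triangle a b) (s, s) (1, 0)) (Ioi s) s :=
    ((hF.differentiableOn one_ne_zero (s, s) (hmaps (left_mem_Icc.2 hsb.le))).hasFDerivWithinAt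
      |>.comp_hasDerivWithinAt_of_eq s hline.hasDerivWithinAt hmaps rfl).mono_of_mem_nhdsWithin
        (Icc_mem_nhdsGT hsb)
  have hslope := tendsto_slope_integral_comp_affine hsb intervalIntegrable_arcsineWeight hlip hderiv
  rw [integral_arcsineWeight, integral_mul_arcsineWeight] at hslope
  rw [mul_comm (π / 2)]
  refine hslope.congr fun u => ?_
  rw [Vker_eq_integral_mul_arcsineWeight, Vker_self, mul_comm π]

/-- Properties of the kernel `V`: (i) `V(s,s) = π F(s,s)`; (ii) the one-sided derivative
of `u ↦ V(u,s)` at `u = s` equals `(π/2) ∂₁F(s,s)`, where `∂₁F(s,s)` is the partial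
derivative of `F` with respect to its first argument (computed within the triangle). -/
theorem stmt19 (a b : ℝ) (hab : a < b) (F : ℝ × ℝ → ℝ)
    (hF : ContDiffOn ℝ 1 F (triangle a b)) :
    (∀ s ∈ Set.Icc a b, Vker F s s = Real.pi * F (s, s)) ∧
      ∀ s ∈ Set.Ico a b,
        Filter.Tendsto (fun u => (Vker F u s - Vker F s s) / (u - s))
          (nhdsWithin s (Set.Ioi s))
          (nhds (Real.pi / 2 * fderivWithin ℝ F (triangle a b) (s, s) (1, 0))) :=
  stmt19_general a b F hF
end
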